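/- Let M be a fully rigid and 2-rigid subcategory of C, with associated rigid cotorsion pair (M, Y). Then Ω(H_Y) ⊆ Y: for every indecomposable object A ∈ H having no nonzero direct summand in Y, and every short exact sequence 0 → ΩA → P → A → 0 with P projective and P → A right minimal, the syzygy ΩA belongs to Y. -/

import Mathlib

open CategoryTheory CategoryTheory.Limits Opposite

attribute [local instance] CategoryTheory.Limits.HasFiniteBiproducts.of_hasFiniteProducts

noncomputable section

universe v u

variable {C : Type u} [Category.{v} C] [Abelian C]

/-- `f`, `g` form a short exact sequence `0 ⟶ X ⟶ Y ⟶ Z ⟶ 0`. -/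
def IsSES {X Y Z : C} (f : X ⟶ Y) (g : Y ⟶ Z) : Prop :=
  ∃ w : f ≫ g = 0, (ShortComplex.mk f g w).ShortExact

/-- A morphism `f : P ⟶ A` is right minimal if every endomorphism `g` of `P`
with `f ∘ g = f` is an isomorphism. -/
def RightMinimal {P A : C} (f : P ⟶ A) : Prop :=
  ∀ g : P ⟶ P, g ≫ f = f → IsIso g

/-- A morphism `f : A ⟶ I` is left minimal if every endomorphism `g` of `I`
with `g ∘ f = f` is an isomorphism. -/
def LeftMinimal {A I : C} (f : A ⟶ I) : Prop :=
  ∀ g : I ⟶ I, f ≫ g = f → IsIso g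

/-- The category `C` is Krull–Schmidt: every nonzero object is a finite direct sum of
objects with local endomorphism rings. -/
def IsKrullSchmidt (C : Type u) [Category.{v} C] [Abelian C] : Prop :=
  ∀ A : C, ¬ IsZero A → ∃ (n : ℕ) (f : Fin n → C),
    (∀ i, IsLocalRing (End (f i))) ∧ Nonempty (A ≅ ⨁ f)

/-- A subcategory (given by a predicate on objects, i.e. a full subcategory closed
under isomorphisms) which is closed under finite direct sums and direct summands. -/
structure IsAdditiveSubcat (S : C → Prop) : Prop where
  of_iso : ∀ {X Y : C}, (X ≅ Y) → S X → S Y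
  sum_mem : ∀ {X Y : C}, S X → S Y → S (X ⊞ Y)
  summands_mem : ∀ {X Y : C}, S (X ⊞ Y) → S X ∧ S Y

section Ext

variable (k : Type*) [Field k] [Linear k C] [EnoughProjectives C]

/-- Vanishing of `Ext^n(A, B)`. -/
def extVanishes (n : ℕ) (A B : C) : Prop :=
  IsZero (((_root_.Ext k C n).obj (op A)).obj B)

/-- `(M, Y)` is a cotorsion pair: `Ext¹(M, Y) = 0` and every object admits the two
approximation short exact sequences. -/
structure IsCotorsionPair (M Y : C → Prop) : Prop where
  subcatM : IsAdditiveSubcat M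
  subcatY : IsAdditiveSubcat Y
  ext_vanishes : ∀ ⦃X Z : C⦄, M X → Y Z → extVanishes k 1 X Z
  exists_res : ∀ A : C, ∃ (Y₀ M₀ : C) (f : Y₀ ⟶ M₀) (g : M₀ ⟶ A),
      Y Y₀ ∧ M M₀ ∧ IsSES f g
  exists_cores : ∀ A : C, ∃ (Y₀ M₀ : C) (f : A ⟶ Y₀) (g : Y₀ ⟶ M₀),
      Y Y₀ ∧ M M₀ ∧ IsSES f g

/-- A rigid cotorsion pair: moreover `Ext¹(M, M') = 0`. -/
def IsRigidCotorsionPair (M Y : C → Prop) : Prop :=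
  IsCotorsionPair k M Y ∧ ∀ ⦃X Z : C⦄, M X → M Z → extVanishes k 1 X Z

/-- Membership in `CoCone(M, N)`: objects `A` admitting a short exact sequence
`0 ⟶ A ⟶ M₁ ⟶ N₂ ⟶ 0` with `M₁ ∈ M` and `N₂ ∈ N`. -/
def MemCoCone (M N : C → Prop) (A : C) : Prop :=
  ∃ (B₁ B₂ : C) (f : A ⟶ B₁) (g : B₁ ⟶ B₂), M B₁ ∧ N B₂ ∧ IsSES f g

/-- Membership in `Cone(M, N)`: objects `A` admitting a short exact sequence
`0 ⟶ M₁ ⟶ N₂ ⟶ A ⟶ 0` with `M₁ ∈ M` and `N₂ ∈ N`. -/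
def MemCone (M N : C → Prop) (A : C) : Prop :=
  ∃ (B₁ B₂ : C) (f : B₁ ⟶ B₂) (g : B₂ ⟶ A), M B₁ ∧ N B₂ ∧ IsSES f g

/-- A morphism factors through an object of the subcategory `S`. -/
def FactorsThruSubcat (S : C → Prop) {X Z : C} (u : X ⟶ Z) : Prop :=
  ∃ (Y' : C) (w : X ⟶ Y') (v : Y' ⟶ Z), S Y' ∧ w ≫ v = u

/-- `A` has no nonzero direct summand belonging to `S`. -/
def NoNonzeroSummandIn (S : C → Prop) (A : C) : Prop :=
  ∀ (B B' : C), (A ≅ B ⊞ B') → S B → IsZero B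

/-- `M` is fully rigid: it fits in a rigid cotorsion pair `(M, Y)` with `M` different
from the subcategory of projective objects, and every indecomposable object of `C`
belongs either to `Y` or to `H = CoCone(M, M)`. -/
def IsFullyRigid (M Y : C → Prop) : Prop :=
  IsRigidCotorsionPair k M Y ∧ M ≠ (fun X : C => Projective X) ∧
    ∀ A : C, Indecomposable A → Y A ∨ MemCoCone M M A

/-- `M` is `n`-rigid: `Ext^i(M, M') = 0` for all `1 ≤ i ≤ n`. -/
def IsNRigid (n : ℕ) (M : C → Prop) : Prop :=
  ∀ i, 1 ≤ i → i ≤ n → ∀ ⦃X Z : C⦄, M X → M Z → extVanishes k i X Z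

/-- `M` is `d`-cluster-tilting. -/
structure IsDClusterTilting (d : ℕ) (M : C → Prop) : Prop where
  subcatM : IsAdditiveSubcat M
  contravariantly_finite : ∀ A : C, ∃ (M₀ : C) (f : M₀ ⟶ A), M M₀ ∧
      ∀ (M' : C) (g : M' ⟶ A), M M' → ∃ h : M' ⟶ M₀, h ≫ f = g
  covariantly_finite : ∀ A : C, ∃ (M₀ : C) (f : A ⟶ M₀), M M₀ ∧
      ∀ (M' : C) (g : A ⟶ M'), M M' → ∃ h : M₀ ⟶ M', f ≫ h = g
  mem_iff_ext_right : ∀ X : C, M X ↔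
      ∀ i, 1 ≤ i → i ≤ d - 1 → ∀ ⦃M₀ : C⦄, M M₀ → extVanishes k i X M₀
  mem_iff_ext_left : ∀ X : C, M X ↔
      ∀ i, 1 ≤ i → i ≤ d - 1 → ∀ ⦃M₀ : C⦄, M M₀ → extVanishes k i M₀ X

/-- The subcategories `M_l`: `M₀ = M` and `M_l = CoCone(M, M_{l-1})`. -/
def MSeq (M : C → Prop) : ℕ → C → Prop
  | 0 => M
  | l + 1 => MemCoCone M (MSeq M l)

end Ext

/-- `Ext¹(X, Z) = 0`, expressed by the splitting of all short exact sequences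
`0 ⟶ Z ⟶ E ⟶ X ⟶ 0`. -/
def Ext1Vanishes (X Z : C) : Prop :=
  ∀ (E : C) (f : Z ⟶ E) (g : E ⟶ X), IsSES f g → ∃ s : X ⟶ E, s ≫ g = 𝟙 X

/-!
Write `0 → ΩA → P → A → 0` for the minimal projective presentation. By Krull–Schmidt it
suffices to show that every indecomposable summand `B` of `ΩA` lies in `Y`; otherwise `B ∈ H`,
say `0 → B → N₁ → N₂ → 0` with `Nᵢ ∈ M`. Dimension shifting along `0 → A → M¹ → M² → 0`
gives `Ext¹(A, N₁) = 0` from `Ext¹(M¹, N₁) = Ext²(M², N₁) = 0`, and `Ext¹(N₂, P) = 0` since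
`P ∈ M`. Hence the projection `ΩA → B → N₁` extends to `s : P → N₁` and the inclusion
`B → ΩA → P` extends to `t : N₁ → P`; the endomorphism `δ = s ≫ t` of `P` fixes `B` and lies
over an endomorphism `α` of `A` factoring through `N₂`. Since `End A` is local, either `α` is
invertible, making `A` a summand of `N₂ ∈ M ⊆ Y`, which is excluded, or `1 - α` is invertible;
then right minimality and Hom-finiteness make `1 - δ` invertible, and `1 - δ` kills `B`.
-/

namespace IsSES

variable {X Y Z : C} {f : X ⟶ Y} {g : Y ⟶ Z}

lemma exact (h : IsSES f g) : (ShortComplex.mk f g h.1).Exact := h.2.exact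

lemma mono (h : IsSES f g) : Mono f := h.2.mono_f

lemma epi (h : IsSES f g) : Epi g := h.2.epi_g

lemma exists_lift (h : IsSES f g) {T : C} (x : T ⟶ Y) (hx : x ≫ g = 0) :
    ∃ y : T ⟶ X, y ≫ f = x :=
  have := h.mono
  ⟨h.exact.lift x hx, h.exact.lift_f x hx⟩

lemma exists_desc (h : IsSES f g) {T : C} (x : Y ⟶ T) (hx : f ≫ x = 0) :
    ∃ y : Z ⟶ T, g ≫ y = x :=
  have := h.epi
  ⟨h.exact.desc x hx, h.exact.g_desc x hx⟩

lemma exists_retraction_of_section (h : IsSES f g) {s : Z ⟶ Y} (hs : s ≫ g = 𝟙 Z) :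
    ∃ r : Y ⟶ X, f ≫ r = 𝟙 X :=
  ⟨_, (ShortComplex.Splitting.ofExactOfSection _ h.exact s hs h.mono).f_r⟩

lemma exists_section_of_retraction (h : IsSES f g) {r : Y ⟶ X} (hr : f ≫ r = 𝟙 X) :
    ∃ s : Z ⟶ Y, s ≫ g = 𝟙 Z :=
  ⟨_, (ShortComplex.Splitting.ofExactOfRetraction _ h.exact r hr h.epi).s_g⟩

lemma of_exact_up_to_refinements [Mono f] [Epi g] (w : f ≫ g = 0)
    (hex : ∀ ⦃T : C⦄ (y : T ⟶ Y), y ≫ g = 0 →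
      ∃ (T' : C) (π : T' ⟶ T) (_ : Epi π) (x : T' ⟶ X), π ≫ y = x ≫ f) :
    IsSES f g :=
  ⟨w, .mk' ((ShortComplex.mk f g w).exact_iff_exact_up_to_refinements.2 hex) ‹_› ‹_›⟩

lemma pushout {N : C} (h : IsSES f g) (φ : X ⟶ N) :
    IsSES (pushout.inr f φ) (pushout.desc g 0 (by simp [h.1]) : Limits.pushout f φ ⟶ Z) := by
  have := h.mono
  have := h.epi
  have : Epi (pushout.desc g 0 (by simp [h.1]) : Limits.pushout f φ ⟶ Z) :=
    epi_of_epi_fac (pushout.inl_desc g 0 _)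
  refine of_exact_up_to_refinements (pushout.inr_desc _ _ _) fun T y hy => ?_
  obtain ⟨T₁, π₁, _, y₁, x₁, hy₁⟩ :=
    (IsPushout.of_hasPushout f φ).hom_eq_add_up_to_refinements y
  have hy₁g : y₁ ≫ g = 0 := by
    have := π₁ ≫= hy
    rwa [reassoc_of% hy₁, Preadditive.add_comp, Category.assoc, Category.assoc,
      pushout.inl_desc, pushout.inr_desc, comp_zero, add_zero, comp_zero] at this
  obtain ⟨T₂, π₂, _, x₂, hx₂⟩ := h.exact.exact_up_to_refinements y₁ hy₁g
  refine ⟨T₂, π₂ ≫ π₁, inferInstance, x₂ ≫ φ + π₂ ≫ x₁, ?_⟩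
  dsimp at hx₂
  simp [hy₁, reassoc_of% hx₂, pushout.condition]

end IsSES

lemma CategoryTheory.IsPushout.exists_eq_of_add_eq_zero {X₁ X₂ X₃ X₄ : C} {t : X₁ ⟶ X₂}
    {l : X₁ ⟶ X₃} {r : X₂ ⟶ X₄} {b : X₃ ⟶ X₄} (h : IsPushout t l r b) {T : C} (x₂ : T ⟶ X₂)
    (x₃ : T ⟶ X₃) (hx : x₂ ≫ r + x₃ ≫ b = 0) :
    ∃ (T' : C) (π : T' ⟶ T) (_ : Epi π) (x₁ : T' ⟶ X₁),
      π ≫ x₂ = x₁ ≫ t ∧ π ≫ x₃ = -(x₁ ≫ l) := by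
  have hex : (ShortComplex.mk (biprod.lift t (-l)) (biprod.desc r b)
      (by simp [h.w])).Exact := h.exact_shortComplex
  obtain ⟨T', π, _, x₁, hx₁⟩ :=
    hex.exact_up_to_refinements (biprod.lift x₂ x₃) (by simpa using hx)
  refine ⟨T', π, inferInstance, x₁, ?_, ?_⟩
  · simpa using hx₁ =≫ biprod.fst
  · simpa using hx₁ =≫ biprod.snd

lemma mono_pushout_inl_of_exact {E Q₀ Q₁ Q₂ : C} {d₂ : Q₂ ⟶ Q₁} {d₁ : Q₁ ⟶ Q₀}
    {w : d₂ ≫ d₁ = 0} (hd : (ShortComplex.mk d₂ d₁ w).Exact) {ν : Q₁ ⟶ E}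
    (hdν : d₂ ≫ ν = 0) : Mono (pushout.inl ν d₁) := by
  refine Preadditive.mono_of_cancel_zero _ fun {T} x hx => ?_
  obtain ⟨T₁, π₁, _, y, hy, hy'⟩ := (IsPushout.of_hasPushout ν d₁).exists_eq_of_add_eq_zero
    x 0 (by rw [zero_comp, add_zero, hx])
  obtain ⟨T₂, π₂, _, z, hz⟩ := hd.exact_up_to_refinements y (by
    rwa [comp_zero, eq_comm, neg_eq_zero] at hy')
  dsimp at hz
  rw [← cancel_epi π₁, ← cancel_epi π₂, comp_zero, comp_zero, hy, reassoc_of% hz, hdν,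
    comp_zero]

lemma epi_pushout_desc {E A M X Q₀ Q₁ : C} {v : E ⟶ A} [Epi v] {a : A ⟶ M} {b : M ⟶ X}
    (hab : IsSES a b) {l : Q₀ ⟶ M} (hl : Epi (l ≫ b)) {ν : Q₁ ⟶ E} {d₁ : Q₁ ⟶ Q₀}
    (hν : ν ≫ v ≫ a = d₁ ≫ l) : Epi (pushout.desc (v ≫ a) l hν) := by
  rw [epi_iff_surjective_up_to_refinements]
  intro T m
  obtain ⟨T₁, π₁, _, q, hq⟩ := surjective_up_to_refinements_of_epi (l ≫ b) (m ≫ b)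
  obtain ⟨T₂, π₂, _, y, hy⟩ := hab.exact.exact_up_to_refinements (π₁ ≫ m - q ≫ l)
    (by simp [hq])
  obtain ⟨T₃, π₃, _, e, he⟩ := surjective_up_to_refinements_of_epi v y
  refine ⟨T₃, π₃ ≫ π₂ ≫ π₁, inferInstance,
    e ≫ pushout.inl ν d₁ + π₃ ≫ π₂ ≫ q ≫ pushout.inr ν d₁, ?_⟩
  dsimp at hy
  rw [Preadditive.comp_sub, sub_eq_iff_eq_add] at hy
  simp only [Preadditive.add_comp, Category.assoc, pushout.inl_desc, pushout.inr_desc,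
    ← reassoc_of% he, hy, Preadditive.comp_add]

/-- Yoneda splicing: the pushout of `E ← Q₁ → Q₀` extends the extension `E` of `A` by `N`
along `a : A ⟶ M`. -/
lemma isSES_splice {N E A M X Q₀ Q₁ Q₂ : C} {u : N ⟶ E} {v : E ⟶ A} (huv : IsSES u v)
    {a : A ⟶ M} {b : M ⟶ X} (hab : IsSES a b) {d₂ : Q₂ ⟶ Q₁} {d₁ : Q₁ ⟶ Q₀} {π : Q₀ ⟶ X}
    {w₂ : d₂ ≫ d₁ = 0} {w₁ : d₁ ≫ π = 0} (hd : (ShortComplex.mk d₂ d₁ w₂).Exact)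
    (hπ : (ShortComplex.mk d₁ π w₁).Exact) [Epi π] {l : Q₀ ⟶ M} (hl : l ≫ b = π)
    {ν : Q₁ ⟶ E} (hν : ν ≫ v ≫ a = d₁ ≫ l) (hdν : d₂ ≫ ν = 0) :
    IsSES (u ≫ pushout.inl ν d₁) (pushout.desc (v ≫ a) l hν) := by
  have := huv.mono
  have := huv.epi
  have := hab.mono
  have := mono_pushout_inl_of_exact hd hdν
  have := epi_pushout_desc hab (hl ▸ ‹Epi π›) hν
  refine IsSES.of_exact_up_to_refinements
    (by simp only [Category.assoc, pushout.inl_desc, reassoc_of% huv.1, zero_comp])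
    fun T y hy => ?_
  have sq := IsPushout.of_hasPushout ν d₁
  obtain ⟨T₁, π₁, _, e, q, hy₁⟩ := sq.hom_eq_add_up_to_refinements y
  have heq : e ≫ v ≫ a + q ≫ l = 0 := by
    simpa only [reassoc_of% hy₁, Preadditive.add_comp, Category.assoc, pushout.inl_desc,
      pushout.inr_desc, comp_zero] using π₁ ≫= hy
  obtain ⟨T₂, π₂, _, z, hz⟩ := hπ.exact_up_to_refinements q (by
    simpa [hl, hab.1] using heq =≫ b)
  dsimp at hz
  obtain ⟨T₃, π₃, _, n, hn⟩ := huv.exact.exact_up_to_refinements (π₂ ≫ e + z ≫ ν) (by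
    rw [← cancel_mono a]
    simp only [Preadditive.add_comp, Category.assoc, hν, ← reassoc_of% hz,
      ← Preadditive.comp_add, heq, comp_zero, zero_comp])
  refine ⟨T₃, π₃ ≫ π₂ ≫ π₁, inferInstance, n, ?_⟩
  calc (π₃ ≫ π₂ ≫ π₁) ≫ y = π₃ ≫ (π₂ ≫ e + z ≫ ν) ≫ pushout.inl ν d₁ := by
        simp only [Category.assoc, hy₁, Preadditive.comp_add, Preadditive.add_comp,
          reassoc_of% hz, sq.w]
    _ = n ≫ u ≫ pushout.inl ν d₁ := by rw [reassoc_of% hn]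

lemma Ext1Vanishes.exists_extension {X N Z E : C} (hX : Ext1Vanishes X N) {u : Z ⟶ E}
    {v : E ⟶ X} (h : IsSES u v) (φ : Z ⟶ N) : ∃ t : E ⟶ N, u ≫ t = φ := by
  have hpo := h.pushout φ
  obtain ⟨s, hs⟩ := hX _ _ _ hpo
  obtain ⟨r, hr⟩ := hpo.exists_retraction_of_section hs
  exact ⟨pushout.inl u φ ≫ r, by rw [pushout.condition_assoc, hr, Category.comp_id]⟩

section DerivedExt

variable (k : Type*) [Field k] [Linear k C] [EnoughProjectives C]

lemma CategoryTheory.ProjectiveResolution.exists_d_comp_eq_of_extVanishes {X N : C}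
    (P : ProjectiveResolution X) (n : ℕ) (h : extVanishes k (n + 1) X N)
    (φ : P.complex.X (n + 1) ⟶ N) (hφ : P.complex.d (n + 2) (n + 1) ≫ φ = 0) :
    ∃ ψ : P.complex.X n ⟶ N, P.complex.d (n + 1) n ≫ ψ = φ := by
  let K := P.complex.linearYonedaObj k N
  have hK : K.ExactAt (n + 1) :=
    (K.exactAt_iff_isZero_homology _).2 (IsZero.of_iso h (P.isoExt (n + 1) N).symm)
  rw [K.exactAt_iff' n (n + 1) (n + 2) (by simp) (by simp),
    ShortComplex.moduleCat_exact_iff] at hK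
  exact hK φ hφ

lemma CategoryTheory.ProjectiveResolution.exists_lift_of_extVanishes {X N E W : C}
    (P : ProjectiveResolution X) (n : ℕ) (hext : extVanishes k (n + 1) X N)
    {u : N ⟶ E} {v : E ⟶ W} (h : IsSES u v)
    (μ : P.complex.X n ⟶ W) (hμ : P.complex.d (n + 1) n ≫ μ = 0) :
    ∃ ν : P.complex.X n ⟶ E, ν ≫ v = μ ∧ P.complex.d (n + 1) n ≫ ν = 0 := by
  have := h.mono
  have := h.epi
  obtain ⟨φ, hφ⟩ := h.exists_lift (P.complex.d (n + 1) n ≫ Projective.factorThru μ v)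
    (by simp [hμ])
  obtain ⟨ψ, hψ⟩ := P.exists_d_comp_eq_of_extVanishes k n hext φ (by
    rw [← cancel_mono u, Category.assoc, hφ, HomologicalComplex.d_comp_d_assoc, zero_comp,
      zero_comp])
  refine ⟨Projective.factorThru μ v - ψ ≫ u, by simp [h.1], ?_⟩
  rw [Preadditive.comp_sub, reassoc_of% hψ, hφ, sub_self]

lemma ext1Vanishes_of_extVanishes {X N : C} (h : extVanishes k 1 X N) : Ext1Vanishes X N := by
  intro E u v hses
  let P := ProjectiveResolution.of X
  let π : P.complex.X 0 ⟶ X := P.π.f 0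
  have : Epi π := (inferInstance : Epi (P.π.f 0))
  have hπ : (ShortComplex.mk (P.complex.d 1 0) π P.complex_d_comp_π_f_zero).Exact := P.exact₀
  obtain ⟨ν, hνv, hdν⟩ :=
    P.exists_lift_of_extVanishes k 0 h hses π P.complex_d_comp_π_f_zero
  refine ⟨hπ.desc ν hdν, ?_⟩
  rw [← cancel_epi π, hπ.g_desc_assoc, hνv, Category.comp_id]

lemma ext1Vanishes_of_isSES_of_extVanishes_two {A M₁ M₂ N : C} {a : A ⟶ M₁} {b : M₁ ⟶ M₂}
    (hab : IsSES a b) (h₁ : Ext1Vanishes M₁ N) (h₂ : extVanishes k 2 M₂ N) :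
    Ext1Vanishes A N := by
  intro E u v huv
  have := hab.mono
  have := hab.epi
  let P := ProjectiveResolution.of M₂
  let π : P.complex.X 0 ⟶ M₂ := P.π.f 0
  have : Epi π := (inferInstance : Epi (P.π.f 0))
  have hπ : (ShortComplex.mk (P.complex.d 1 0) π P.complex_d_comp_π_f_zero).Exact := P.exact₀
  let l := Projective.factorThru π b
  obtain ⟨μ, hμ⟩ := hab.exists_lift (P.complex.d 1 0 ≫ l) (by
    rw [Category.assoc, Projective.factorThru_comp]; exact P.complex_d_comp_π_f_zero)
  -- `Ext²(M₂, N) = 0` lifts the comparison map `μ : P₁ → A` to a cocycle with values in `E`.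
  obtain ⟨ν, hνv, hdν⟩ := P.exists_lift_of_extVanishes k 1 h₂ huv μ (by
    rw [← cancel_mono a, Category.assoc, hμ, HomologicalComplex.d_comp_d_assoc, zero_comp,
      zero_comp])
  have hsplice := isSES_splice huv hab (P.exact_succ 0) hπ (Projective.factorThru_comp _ _)
    (by rw [reassoc_of% hνv, hμ]) hdν
  obtain ⟨s, hs⟩ := h₁ _ _ _ hsplice
  obtain ⟨r, hr⟩ := hsplice.exists_retraction_of_section hs
  exact huv.exists_section_of_retraction (r := pushout.inl _ _ ≫ r) (by simpa using hr)

end DerivedExt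

def CategoryTheory.Retract.isoBiprod {X W : C} (r : Retract X W) :
    W ≅ X ⊞ cokernel r.i :=
  have hses : (ShortComplex.mk r.i (cokernel.π r.i) (cokernel.condition _)).ShortExact :=
    .mk' (ShortComplex.exact_of_g_is_cokernel _ (cokernelIsCokernel _)) inferInstance
      inferInstance
  (ShortComplex.Splitting.ofExactOfRetraction _ hses.exact r.r r.retract
    hses.epi_g).isoBinaryBiproduct

namespace IsAdditiveSubcat

variable {S : C → Prop}

lemma mem_of_retract (hS : IsAdditiveSubcat S) {X W : C} (r : Retract X W) (hW : S W) : S X :=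
  (hS.summands_mem (hS.of_iso r.isoBiprod hW)).1

lemma biproduct_mem (hS : IsAdditiveSubcat S) {W : C} (hW : S W) {J : Type} [Finite J]
    (f : J → C) (hf : ∀ j, S (f j)) : S (⨁ f) := by
  have : ObjectProperty.IsStableUnderRetracts S := ⟨hS.mem_of_retract⟩
  have : ObjectProperty.Nonempty S := ⟨W, hW⟩
  have : ObjectProperty.IsClosedUnderBinaryProducts S := .mk' <| by
    rintro _ ⟨F, hF⟩
    exact ObjectProperty.prop_of_iso _
      ((biprod.isoProd _ _).trans (HasLimit.isoOfNatIso (diagramIsoPair F)).symm)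
      (hS.sum_mem (hF _) (hF _))
  have : ObjectProperty.IsClosedUnderFiniteProducts S := .mk'
  exact ObjectProperty.prop_of_iso _ (biproduct.isoProduct f).symm
    (ObjectProperty.prop_product _ hf)

end IsAdditiveSubcat

lemma NoNonzeroSummandIn.not_mem {S : C → Prop} {A : C} (h : NoNonzeroSummandIn S A)
    (hA : ¬ IsZero A) : ¬ S A := fun hSA =>
  hA (h A _ (isoBiprodZero (isZero_zero C)) hSA)

section KrullSchmidt

lemma not_isZero_of_isLocalRing_end {B : C} [IsLocalRing (End B)] : ¬ IsZero B := fun h =>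
  one_ne_zero (α := End B) (h.eq_of_src _ _)

lemma indecomposable_of_isLocalRing_end {B : C} [IsLocalRing (End B)] : Indecomposable B := by
  refine ⟨not_isZero_of_isLocalRing_end, fun U V e => ?_⟩
  let p : End B := e.hom ≫ (biprod.fst ≫ biprod.inl) ≫ e.inv
  let q : End B := e.hom ≫ (biprod.snd ≫ biprod.inr) ≫ e.inv
  have hpq : p + q = 1 := by
    rw [← Preadditive.comp_add, ← Preadditive.add_comp, biprod.total, Category.id_comp,
      e.hom_inv_id]
    rfl
  rcases IsLocalRing.isUnit_or_isUnit_of_add_one hpq with hp | hq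
  · have := (isUnit_iff_isIso p).1 hp
    have hq0 : q = 0 := by rw [← cancel_epi p]; simp [p, q]
    right
    rw [IsZero.iff_id_eq_zero]
    simpa [q] using congrArg (fun φ => biprod.inr ≫ e.inv ≫ φ ≫ e.hom ≫ biprod.snd) hq0
  · have := (isUnit_iff_isIso q).1 hq
    have hp0 : p = 0 := by rw [← cancel_epi q]; simp [p, q]
    left
    rw [IsZero.iff_id_eq_zero]
    simpa [p] using congrArg (fun φ => biprod.inl ≫ e.inv ≫ φ ≫ e.hom ≫ biprod.fst) hp0

lemma isLocalRing_end_of_iso {X Y : C} (e : X ≅ Y) [IsLocalRing (End X)] :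
    IsLocalRing (End Y) := by
  have : Nontrivial (End Y) := e.conj.injective.nontrivial
  refine ⟨fun {a b} hab => ?_⟩
  have : e.symm.conj a + e.symm.conj b = 1 := by
    rw [← map_one e.symm.conj, ← hab]
    exact (Preadditive.comp_add _ _ _ _ _ _).symm.trans
      (congrArg (e.symm.inv ≫ ·) (Preadditive.add_comp _ _ _ _ _ _).symm)
  exact (IsLocalRing.isUnit_or_isUnit_of_add_one this).imp
    (fun h => by simpa using h.map e.conj) (fun h => by simpa using h.map e.conj)

lemma CategoryTheory.Indecomposable.nonempty_iso_of_retract {A B : C} (hA : Indecomposable A)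
    (r : Retract B A) (hB : ¬ IsZero B) : Nonempty (A ≅ B) :=
  (hA.2 _ _ r.isoBiprod).elim (fun h => (hB h).elim)
    fun h => ⟨r.isoBiprod ≪≫ (isoBiprodZero h).symm⟩

lemma isLocalRing_end_of_indecomposable (hKS : IsKrullSchmidt C) {A : C}
    (hA : Indecomposable A) : IsLocalRing (End A) := by
  obtain ⟨n, f, hloc, ⟨e⟩⟩ := hKS A hA.1
  obtain ⟨i⟩ : Nonempty (Fin n) := by
    refine not_isEmpty_iff.1 fun _ => hA.1 (IsZero.of_iso ?_ e)
    exact (IsZero.iff_id_eq_zero _).2 (biproduct.hom_ext _ _ isEmptyElim)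
  obtain ⟨e'⟩ := hA.nonempty_iso_of_retract
    ⟨biproduct.ι f i ≫ e.inv, e.hom ≫ biproduct.π f i, by simp⟩ not_isZero_of_isLocalRing_end
  exact isLocalRing_end_of_iso e'.symm

lemma IsAdditiveSubcat.mem_of_isKrullSchmidt (hKS : IsKrullSchmidt C) {S : C → Prop}
    (hS : IsAdditiveSubcat S) {W : C} (hW : S W) (X : C)
    (h : ∀ B, Retract B X → IsLocalRing (End B) → S B) : S X := by
  by_cases hX : IsZero X
  · exact hS.mem_of_retract (IsZero.retract W hX) hW
  obtain ⟨n, f, hloc, ⟨e⟩⟩ := hKS X hX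
  exact hS.of_iso e.symm (hS.biproduct_mem hW f fun i =>
    h _ ⟨biproduct.ι f i ≫ e.inv, e.hom ≫ biproduct.π f i, by simp⟩ (hloc i))

end KrullSchmidt

section HomFinite

variable (k : Type*) [Field k] [Linear k C]

lemma isIso_of_comp_eq_id_of_finite {P : C} [Module.Finite k (P ⟶ P)] {φ σ : P ⟶ P}
    (h : σ ≫ φ = 𝟙 P) : IsIso φ := by
  have : Module.Finite k (End P) := ‹Module.Finite k (P ⟶ P)›
  have : IsArtinianRing (End P) := .of_finite k (End P)
  exact ⟨σ, mul_eq_one_symm (M := End P) h, h⟩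

lemma RightMinimal.isIso_of_comp_eq_comp {P A : C} [Projective P] [Module.Finite k (P ⟶ P)]
    {f : P ⟶ A} [Epi f] (hmin : RightMinimal f) {φ : P ⟶ P} {β : A ⟶ A} [IsIso β]
    (h : φ ≫ f = f ≫ β) : IsIso φ := by
  let γ := Projective.factorThru (f ≫ inv β) f
  have : IsIso (γ ≫ φ) := hmin _ (by simp [γ, h])
  exact isIso_of_comp_eq_id_of_finite k (σ := inv (γ ≫ φ) ≫ γ) (by simp)

end HomFinite

section CotorsionPair

variable (k : Type*) [Field k] [Linear k C] [EnoughProjectives C] {M Y : C → Prop}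

lemma IsCotorsionPair.mem_left_of_projective (h : IsCotorsionPair k M Y) (P : C)
    [Projective P] : M P := by
  obtain ⟨_, M₀, _, g, _, hM₀, hses⟩ := h.exists_res P
  have := hses.epi
  exact h.subcatM.mem_of_retract ⟨Projective.factorThru (𝟙 P) g, g, by simp⟩ hM₀

lemma IsRigidCotorsionPair.mem_right_of_mem_left (h : IsRigidCotorsionPair k M Y) {X : C}
    (hX : M X) : Y X := by
  obtain ⟨Y₀, M₀, f, g, hY₀, hM₀, hses⟩ := h.1.exists_cores X
  obtain ⟨s, hs⟩ := ext1Vanishes_of_extVanishes k (h.2 hM₀ hX) _ _ _ hses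
  obtain ⟨r, hr⟩ := hses.exists_retraction_of_section hs
  exact h.1.subcatY.mem_of_retract ⟨f, r, hr⟩ hY₀

end CotorsionPair

lemma exists_endo_of_retract_syzygy {ΩA P A B N₁ N₂ : C} {g : ΩA ⟶ P} {f : P ⟶ A}
    (hgf : IsSES g f) {j : B ⟶ N₁} {c : N₁ ⟶ N₂} (hjc : IsSES j c) (r : Retract B ΩA)
    (hAN : Ext1Vanishes A N₁) (hNP : Ext1Vanishes N₂ P) :
    ∃ (w : A ⟶ N₂) (y : N₂ ⟶ A) (δ : P ⟶ P), δ ≫ f = f ≫ w ≫ y ∧ r.i ≫ g ≫ δ = r.i ≫ g := by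
  obtain ⟨s, hs⟩ := hAN.exists_extension hgf (r.r ≫ j)
  obtain ⟨t, ht⟩ := hNP.exists_extension hjc (r.i ≫ g)
  obtain ⟨w, hw⟩ := hgf.exists_desc (s ≫ c) (by rw [reassoc_of% hs, hjc.1, comp_zero])
  obtain ⟨y, hy⟩ := hjc.exists_desc (t ≫ f) (by rw [reassoc_of% ht, hgf.1, comp_zero])
  refine ⟨w, y, s ≫ t, ?_, ?_⟩
  · rw [Category.assoc, ← hy, reassoc_of% hw]
  · rw [reassoc_of% hs, ht, r.retract_assoc]

lemma isZero_of_retract_syzygy_of_memCoCone (k : Type*) [Field k] [Linear k C]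
    [EnoughProjectives C] {M Y : C → Prop} (hMY : IsRigidCotorsionPair k M Y)
    (h2 : IsNRigid k 2 M) {A : C} [IsLocalRing (End A)] (hAY : ¬ Y A) (hAH : MemCoCone M M A)
    {ΩA P : C} {g : ΩA ⟶ P} {f : P ⟶ A} (hgf : IsSES g f) [Projective P]
    [Module.Finite k (P ⟶ P)] (hmin : RightMinimal f) {B : C} (r : Retract B ΩA)
    (hBH : MemCoCone M M B) : IsZero B := by
  obtain ⟨N₁, N₂, j, c, hN₁, hN₂, hjc⟩ := hBH
  obtain ⟨M₁, M₂, a, b, hM₁, hM₂, hab⟩ := hAH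
  have hAN : Ext1Vanishes A N₁ := ext1Vanishes_of_isSES_of_extVanishes_two k hab
    (ext1Vanishes_of_extVanishes k (hMY.2 hM₁ hN₁)) (h2 2 one_le_two le_rfl hM₂ hN₁)
  have hNP : Ext1Vanishes N₂ P :=
    ext1Vanishes_of_extVanishes k (hMY.2 hN₂ (hMY.1.mem_left_of_projective k P))
  obtain ⟨w, y, δ, hδ, hgδ⟩ := exists_endo_of_retract_syzygy hgf hjc r hAN hNP
  rcases IsLocalRing.isUnit_or_isUnit_of_add_one (add_sub_cancel (show End A from w ≫ y) 1)
    with hα | hα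
  · have := (isUnit_iff_isIso _).1 hα
    refine absurd (hMY.mem_right_of_mem_left k ?_) hAY
    exact hMY.1.subcatM.mem_of_retract
      ⟨w, y ≫ inv (w ≫ y), by rw [← Category.assoc, IsIso.hom_inv_id]⟩ hN₂
  · have := (isUnit_iff_isIso _).1 hα
    have := hgf.epi
    have := hgf.mono
    have : IsIso (𝟙 P - δ) := hmin.isIso_of_comp_eq_comp k (β := 𝟙 A - w ≫ y) (by
      rw [Preadditive.sub_comp, Preadditive.comp_sub, hδ, Category.id_comp, Category.comp_id])
    refine IsZero.of_mono_eq_zero (r.i ≫ g) ?_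
    rw [← cancel_mono (𝟙 P - δ), Preadditive.comp_sub, Category.comp_id, Category.assoc, hgδ,
      sub_self, zero_comp]

theorem stmt7_general (k : Type*) [Field k] [Linear k C]
    [EnoughProjectives C]
    (hKS : IsKrullSchmidt C) (hfin : ∀ X Y : C, Module.Finite k (X ⟶ Y))
    (M Y : C → Prop) (hfr : IsFullyRigid k M Y) (h2 : IsNRigid k 2 M)
    (A : C) (hA : Indecomposable A) (hAH : MemCoCone M M A)
    (hAY : NoNonzeroSummandIn Y A)
    {ΩA P : C} (g : ΩA ⟶ P) (f : P ⟶ A) (hses : IsSES g f)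
    (hP : Projective P) (hmin : RightMinimal f) :
    Y ΩA := by
  obtain ⟨hMY, -, hfull⟩ := hfr
  have := isLocalRing_end_of_indecomposable hKS hA
  have := hfin P P
  obtain ⟨Y₀, -, -, -, hY₀, -⟩ := hMY.1.exists_res A
  refine hMY.1.subcatY.mem_of_isKrullSchmidt hKS hY₀ ΩA fun B r hB => ?_
  refine (hfull B indecomposable_of_isLocalRing_end).resolve_right fun hBH => ?_
  exact not_isZero_of_isLocalRing_end
    (isZero_of_retract_syzygy_of_memCoCone k hMY h2 (hAY.not_mem hA.1) hAH hses hmin r hBH)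

theorem stmt7 (k : Type*) [Field k] [Linear k C]
    [EnoughProjectives C] [EnoughInjectives C]
    (hKS : IsKrullSchmidt C) (hfin : ∀ X Y : C, Module.Finite k (X ⟶ Y))
    (M Y : C → Prop) (hfr : IsFullyRigid k M Y) (h2 : IsNRigid k 2 M)
    (A : C) (hA : Indecomposable A) (hAH : MemCoCone M M A)
    (hAY : NoNonzeroSummandIn Y A)
    {ΩA P : C} (g : ΩA ⟶ P) (f : P ⟶ A) (hses : IsSES g f)
    (hP : Projective P) (hmin : RightMinimal f) :
    Y ΩA :=
  stmt7_general k hKS hfin M Y hfr h2 A hA hAH hAY g f hses hP hmin
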